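/- Let Q(t) ∈ ℤ[t] be monic of degree r with Q mod 2 irreducible and odd constant coefficient, and let λ be the multiplicative order of t in (ℤ/2)[t]/(Q). Then the multiplicative order of t in (ℤ/2^w)[t]/(Q) equals 2^{w−1} λ for all w ≥ 1 if and only if neither Q(t) nor Q(−t) satisfies Condition S. -/

import Mathlib

/-!
In `A = ℤ[t]/(Q)` the element `2` is a non-zero-divisor (`Q` is monic) and generates a prime ideal
(`A/2A = 𝔽₂[t]/(Q̄)`). Write `t^λ = 1 + 2u`, so `t^(2λ) = 1 + 4u(u+1)`. Squaring `1 + 2^k c` gives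
`1 + 2^(k+1) (c + 2^(k-1) c²)`, whose cofactor is odd along with `c` once `k ≥ 2`. Hence the orders
modulo `2^w` are `2^(w-1) λ` for all `w` exactly when `2 ∤ u(u+1)`, i.e. `Q̄ ∤ ū` and `Q̄ ∤ ū + 1`.

To test these, lift to `t^λ - 1 = 2u + Qv` in `ℤ[t]` and substitute `t ↦ t²`. Since
`f(t²) ≡ f(t)² (mod 2)`, writing `Q(t²) = Q² - 2d` gives `ū² ≡ d̄ v̄² + Q̄ v̄ (mod Q̄²)`, and
differentiating `t^λ - 1 = Q̄ v̄` (`λ` is odd) gives `t Q̄' v̄ ≡ 1 (mod Q̄)`. Hence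
`Q̄ ∣ ū ⟺ Q̄² ∣ d̄ + t Q̄' Q̄` and `Q̄ ∣ ū + 1 ⟺ Q̄² ∣ d̄ + (t Q̄')² + t Q̄' Q̄`; as `deg d̄ < 2r`
these say `d̄ + t Q̄' Q̄ = r Q̄²` and `d̄ + (t Q̄')² + t Q̄' Q̄ = 0`. Finally, with `Q(-t) = Q - 2o`
and `ō = t Q̄'`, the two sides of Condition S for `Q(-t)`, resp. `Q(t)`, differ by `4` times a lift
of the left-hand side of the first, resp. second, equation.
-/

open Polynomial

/-- Condition S: `Q(t)² + Q(−t)² ≡ 2·q_r·Q(t²) (mod 8)` where `q_r` is the leading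
coefficient of `Q`. -/
def conditionS (Q : Polynomial ℤ) : Prop :=
  (Q ^ 2 + (Q.comp (-X)) ^ 2).map (Int.castRingHom (ZMod 8)) =
    (C (2 * Q.leadingCoeff) * Q.comp (X ^ 2)).map (Int.castRingHom (ZMod 8))

section TwoAdicLifting

variable {A : Type*} [CommRing A]

theorem two_pow_succ_dvd_sq_sub_one {y : A} {w : ℕ} (hw : 1 ≤ w) (h : 2 ^ w ∣ y - 1) :
    2 ^ (w + 1) ∣ y ^ 2 - 1 := by
  have h2 : (2 : A) ∣ y - 1 + 2 := dvd_add ((dvd_pow_self 2 (by omega)).trans h) dvd_rfl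
  rw [pow_succ, show y ^ 2 - 1 = (y - 1) * (y - 1 + 2) by ring]
  exact mul_dvd_mul h h2

theorem two_pow_succ_dvd_pow_sub_one {x : A} {n : ℕ} (h : 2 ∣ x ^ n - 1) (s : ℕ) :
    2 ^ (s + 1) ∣ x ^ (2 ^ s * n) - 1 := by
  induction s with
  | zero => simpa using h
  | succ s ih =>
    rw [show 2 ^ (s + 1) * n = 2 ^ s * n * 2 by ring, pow_mul]
    exact two_pow_succ_dvd_sq_sub_one (by omega) ih

theorem exists_pow_eq_one_add_two_pow_mul {x u : A} {n : ℕ} (hu : x ^ n = 1 + 2 * u)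
    (hu2 : ¬ 2 ∣ u * (u + 1)) (s : ℕ) :
    ∃ c, x ^ (2 ^ (s + 1) * n) = 1 + 2 ^ (s + 2) * c ∧ ¬ 2 ∣ c := by
  induction s with
  | zero => exact ⟨u * (u + 1), by rw [zero_add, pow_one, pow_mul', hu]; ring, hu2⟩
  | succ s ih =>
    obtain ⟨c, hc, hc2⟩ := ih
    refine ⟨c + 2 ^ (s + 1) * c ^ 2, ?_, fun h => hc2 ?_⟩
    · rw [show 2 ^ (s + 1 + 1) * n = 2 ^ (s + 1) * n * 2 by ring, pow_mul, hc]
      ring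
    · have : (2 : A) ∣ 2 ^ (s + 1) * c ^ 2 := (dvd_pow_self 2 (by omega)).mul_right _
      simpa using dvd_sub h this

theorem not_two_pow_dvd_pow_sub_one (hreg : IsLeftRegular (2 : A)) {x u : A} {n : ℕ}
    (hu : x ^ n = 1 + 2 * u) (hu2 : ¬ 2 ∣ u * (u + 1)) (s : ℕ) :
    ¬ 2 ^ (s + 2) ∣ x ^ (2 ^ s * n) - 1 := by
  have cancel : ∀ k (a b : A), 2 ^ k * a ∣ 2 ^ k * b → a ∣ b := fun k a b ⟨t, ht⟩ =>
    ⟨t, (hreg.pow k) (show 2 ^ k * b = 2 ^ k * (a * t) by rw [ht, mul_assoc])⟩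
  rintro ⟨t, ht⟩
  cases s with
  | zero =>
    rw [pow_zero, one_mul] at ht
    exact hu2 ((cancel 1 2 u ⟨t, by linear_combination ht - hu⟩).mul_right _)
  | succ s =>
    obtain ⟨c, hc, hc2⟩ := exists_pow_eq_one_add_two_pow_mul hu hu2 s
    exact hc2 (cancel (s + 2) 2 c ⟨t, by linear_combination ht - hc⟩)

theorem orderOf_eq_two_pow_mul_iff (h2 : (Ideal.span {(2 : A)}).IsPrime)
    (hreg : IsLeftRegular (2 : A)) {x u : A} {lam : ℕ} (ord : ℕ → ℕ)
    (hlam : ∀ m, lam ∣ m ↔ 2 ∣ x ^ m - 1) (hord : ∀ w m, ord w ∣ m ↔ 2 ^ w ∣ x ^ m - 1)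
    (hpos : 0 < lam) (hu : x ^ lam = 1 + 2 * u) :
    (∀ w, 1 ≤ w → ord w = 2 ^ (w - 1) * lam) ↔ ¬ 2 ∣ u ∧ ¬ 2 ∣ u + 1 := by
  have hsplit : ¬ 2 ∣ u * (u + 1) ↔ ¬ 2 ∣ u ∧ ¬ 2 ∣ u + 1 := by
    simp only [← Ideal.mem_span_singleton, h2.mul_mem_iff_mem_or_mem, not_or]
  have hx : 2 ∣ x ^ lam - 1 := ⟨u, by rw [hu]; ring⟩
  rw [← hsplit]
  constructor
  · rintro hall ⟨t, ht⟩
    have h3 : ord 3 ∣ 2 * lam := (hord 3 _).2 ⟨t, by rw [pow_mul', hu]; linear_combination 4 * ht⟩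
    rw [hall 3 (by norm_num)] at h3
    have := Nat.le_of_dvd (by omega) h3
    omega
  · rintro hu2 w hw
    obtain ⟨s, rfl⟩ : ∃ s, w = s + 1 := ⟨w - 1, by omega⟩
    rw [Nat.add_sub_cancel]
    have hup : ord (s + 1) ∣ 2 ^ s * lam := (hord _ _).2 (two_pow_succ_dvd_pow_sub_one hx s)
    obtain ⟨k, hk⟩ : lam ∣ ord (s + 1) :=
      (hlam _).2 ((dvd_pow_self 2 (by omega)).trans ((hord _ _).1 dvd_rfl))
    rw [hk, mul_comm, Nat.mul_dvd_mul_iff_right hpos, Nat.dvd_prime_pow Nat.prime_two] at hup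
    obtain ⟨j, hjs, rfl⟩ := hup
    obtain rfl | hj := eq_or_lt_of_le hjs
    · rw [hk, mul_comm]
    · have h := (hord _ _).1 (hk ▸ dvd_rfl : ord (s + 1) ∣ lam * 2 ^ j)
      rw [mul_comm] at h
      exact absurd ((pow_dvd_pow 2 (by omega : j + 2 ≤ s + 1)).trans h)
        (not_two_pow_dvd_pow_sub_one hreg hu hu2 j)

end TwoAdicLifting

section XDerivative

variable {R : Type*}

theorem X_mul_derivative_X_pow [CommSemiring R] (n : ℕ) :
    X * derivative (X ^ n : R[X]) = (n : R[X]) * X ^ n := by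
  rcases n with _ | k
  · simp
  · rw [derivative_X_pow, Nat.add_sub_cancel, pow_succ, map_natCast]
    ring

theorem coeff_X_mul_derivative [Semiring R] (p : R[X]) (n : ℕ) :
    (X * derivative p).coeff n = p.coeff n * n := by
  rcases n with _ | k
  · simp
  · rw [coeff_X_mul, coeff_derivative]
    push_cast
    rfl

theorem natDegree_X_mul_derivative_le [Semiring R] (p : R[X]) :
    (X * derivative p).natDegree ≤ p.natDegree := by
  refine natDegree_le_iff_coeff_eq_zero.2 fun n hn => ?_
  rw [coeff_X_mul_derivative, coeff_eq_zero_of_natDegree_lt (by exact_mod_cast hn), zero_mul]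

theorem dvd_X_mul_derivative_mul_sub [CommRing R] {q v : R[X]} {n : ℕ}
    (h : X ^ n - 1 = q * v) : q ∣ X * derivative q * v - (n : R[X]) := by
  have hd := congrArg (X * derivative ·) h
  rw [derivative_sub, derivative_one, sub_zero, X_mul_derivative_X_pow, derivative_mul] at hd
  exact ⟨(n : R[X]) * v - X * derivative v, by linear_combination (n : R[X]) * h - hd⟩

end XDerivative

section IntegerPolynomials

theorem map_intCastRingHom_eq_zero_iff (n : ℕ) (p : ℤ[X]) :
    p.map (Int.castRingHom (ZMod n)) = 0 ↔ (n : ℤ[X]) ∣ p := by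
  rw [← map_natCast C, C_dvd_iff_dvd_coeff, Polynomial.ext_iff]
  exact forall_congr' fun i => by simp [ZMod.intCast_zmod_eq_zero_iff_dvd]

theorem map_dvd_map_intCastRingHom_iff (n : ℕ) (Q p : ℤ[X]) :
    Q.map (Int.castRingHom (ZMod n)) ∣ p.map (Int.castRingHom (ZMod n)) ↔
      ∃ u v, p = n * u + Q * v := by
  constructor
  · rintro ⟨c, hc⟩
    obtain ⟨v, rfl⟩ := map_surjective (Int.castRingHom (ZMod n)) ZMod.intCast_surjective c
    obtain ⟨u, hu⟩ := (map_intCastRingHom_eq_zero_iff n (p - Q * v)).1 (by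
      rw [Polynomial.map_sub, Polynomial.map_mul, hc, sub_self])
    exact ⟨u, v, by linear_combination hu⟩
  · rintro ⟨u, v, rfl⟩
    refine ⟨v.map (Int.castRingHom (ZMod n)), ?_⟩
    simp

theorem map_four_mul_intCastRingHom_eq_zero_iff (p : ℤ[X]) :
    (4 * p).map (Int.castRingHom (ZMod 8)) = 0 ↔ p.map (Int.castRingHom (ZMod 2)) = 0 := by
  rw [map_intCastRingHom_eq_zero_iff, map_intCastRingHom_eq_zero_iff, Nat.cast_ofNat,
    Nat.cast_ofNat, show (8 : ℤ[X]) = 4 * 2 by norm_num, mul_dvd_mul_iff_left (by norm_num)]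

theorem map_comp_X_sq_intCastRingHom_two (p : ℤ[X]) :
    (p.comp (X ^ 2)).map (Int.castRingHom (ZMod 2)) = (p.map (Int.castRingHom (ZMod 2))) ^ 2 := by
  rw [map_comp, Polynomial.map_pow, map_X, ← expand_eq_comp_X_pow, ZMod.expand_card]

theorem exists_comp_X_sq_eq (p : ℤ[X]) : ∃ d, p.comp (X ^ 2) = p ^ 2 - 2 * d := by
  obtain ⟨d, hd⟩ := (map_intCastRingHom_eq_zero_iff 2 (p ^ 2 - p.comp (X ^ 2))).1 (by
    rw [Polynomial.map_sub, map_comp_X_sq_intCastRingHom_two, Polynomial.map_pow, sub_self])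
  exact ⟨d, by push_cast at hd; linear_combination -hd⟩

theorem degree_lt_of_comp_X_sq_eq {Q d : ℤ[X]} (hQ : Q.Monic)
    (hd : Q.comp (X ^ 2) = Q ^ 2 - 2 * d) : d.degree < ↑(2 * Q.natDegree) := by
  have hsq : (Q ^ 2).degree = ↑(2 * Q.natDegree) := by
    rw [degree_eq_natDegree (hQ.pow 2).ne_zero, hQ.natDegree_pow]
  have hexp : (Q.comp (X ^ 2)).degree = ↑(2 * Q.natDegree) := by
    rw [← expand_eq_comp_X_pow, degree_eq_natDegree ((hQ.expand two_pos).ne_zero),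
      natDegree_expand, mul_comm]
  have h2d : 2 * d = Q ^ 2 - Q.comp (X ^ 2) := by linear_combination hd
  have hlt := degree_sub_lt_left (hsq.trans hexp.symm) (hQ.pow 2).ne_zero
    (by rw [(hQ.pow 2).leadingCoeff]; exact (hQ.expand two_pos).symm)
  rwa [← h2d, hsq, show (2 : ℤ[X]) = C 2 from rfl, degree_C_mul two_ne_zero] at hlt

theorem exists_comp_neg_X_eq (p : ℤ[X]) :
    ∃ o, p.comp (-X) = p - 2 * o ∧
      o.map (Int.castRingHom (ZMod 2)) = X * derivative (p.map (Int.castRingHom (ZMod 2))) := by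
  induction p using Polynomial.induction_on' with
  | add p₁ p₂ h₁ h₂ =>
    obtain ⟨o₁, h₁, h₁'⟩ := h₁
    obtain ⟨o₂, h₂, h₂'⟩ := h₂
    refine ⟨o₁ + o₂, by rw [add_comp, h₁, h₂]; ring, ?_⟩
    rw [Polynomial.map_add, Polynomial.map_add, h₁', h₂', derivative_add, mul_add]
  | monomial n a =>
    simp only [← C_mul_X_pow_eq_monomial, mul_comp, C_comp, X_pow_comp, Polynomial.map_mul,
      map_C, Polynomial.map_pow, map_X, derivative_C_mul, mul_left_comm X, X_mul_derivative_X_pow]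
    rcases Nat.even_or_odd n with hn | hn
    · refine ⟨0, by rw [hn.neg_pow]; ring, ?_⟩
      rw [← map_natCast C, (ZMod.natCast_eq_zero_iff_even).2 hn]
      simp
    · refine ⟨C a * X ^ n, by rw [hn.neg_pow]; ring, ?_⟩
      rw [← map_natCast C, (ZMod.natCast_eq_one_iff_odd).2 hn]
      simp

theorem exists_map_sq_add_eq_zero {Q u v d : ℤ[X]} {n : ℕ} (h : X ^ n - 1 = 2 * u + Q * v)
    (hd : Q.comp (X ^ 2) = Q ^ 2 - 2 * d) :
    ∃ e, (u.map (Int.castRingHom (ZMod 2))) ^ 2 +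
      d.map (Int.castRingHom (ZMod 2)) * (v.map (Int.castRingHom (ZMod 2))) ^ 2 +
      (Q.map (Int.castRingHom (ZMod 2))) ^ 2 * e +
      Q.map (Int.castRingHom (ZMod 2)) * v.map (Int.castRingHom (ZMod 2)) = 0 := by
  obtain ⟨du, hu⟩ := exists_comp_X_sq_eq u
  obtain ⟨dv, hv⟩ := exists_comp_X_sq_eq v
  have hcomp := congrArg (·.comp (X ^ 2)) h
  simp only [sub_comp, pow_comp, X_comp, one_comp, add_comp, mul_comp, ofNat_comp, hu, hv, hd,
    Nat.cast_ofNat] at hcomp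
  rw [pow_right_comm] at hcomp
  have key : u ^ 2 + d * v ^ 2 + Q ^ 2 * dv + Q * v = 2 * (d * dv - du - u * Q * v - u) :=
    mul_left_cancel₀ two_ne_zero (by linear_combination hcomp - (X ^ n + 1 + 2 * u + Q * v) * h)
  refine ⟨dv.map (Int.castRingHom (ZMod 2)), ?_⟩
  have := congrArg (Polynomial.map (Int.castRingHom (ZMod 2))) key
  simpa [show (2 : (ZMod 2)[X]) = 0 from CharTwo.two_eq_zero] using this

end IntegerPolynomials

section QuotientByPolynomial

theorem orderOf_mk_X_dvd_iff {R : Type*} [CommRing R] (q : R[X]) (m : ℕ) :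
    orderOf (Ideal.Quotient.mk (Ideal.span {q}) X) ∣ m ↔ q ∣ X ^ m - 1 := by
  rw [orderOf_dvd_iff_pow_eq_one, ← map_pow, ← map_one (Ideal.Quotient.mk _),
    Ideal.Quotient.eq, Ideal.mem_span_singleton]

theorem orderOf_mk_X_pos {K : Type*} [Field K] [Finite K] {q : K[X]} (hq : q.Monic)
    (h0 : q.coeff 0 ≠ 0) : 0 < orderOf (Ideal.Quotient.mk (Ideal.span {q}) X) := by
  have : Finite (K[X] ⧸ Ideal.span {q}) := by
    have := (AdjoinRoot.powerBasis' hq).finite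
    exact Module.finite_of_finite (R := K) (M := AdjoinRoot q)
  obtain ⟨g, hg⟩ : X ∣ q - C (q.coeff 0) := by simp [X_dvd_iff]
  have hunit : IsUnit (Ideal.Quotient.mk (Ideal.span {q}) X) := by
    refine IsUnit.of_mul_eq_one (Ideal.Quotient.mk _ (-C (q.coeff 0)⁻¹ * g)) ?_
    rw [← map_mul, ← map_one (Ideal.Quotient.mk _), Ideal.Quotient.eq, Ideal.mem_span_singleton]
    refine ⟨-C (q.coeff 0)⁻¹, ?_⟩
    have : C (q.coeff 0)⁻¹ * C (q.coeff 0) = 1 := by rw [← C_mul, inv_mul_cancel₀ h0, C_1]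
    linear_combination C (q.coeff 0)⁻¹ * hg + this
  exact hunit.isOfFinOrder.orderOf_pos

end QuotientByPolynomial

section AdjoinRootInt

theorem natCast_dvd_adjoinRoot_mk_iff (n : ℕ) (Q p : ℤ[X]) :
    (n : AdjoinRoot Q) ∣ AdjoinRoot.mk Q p ↔
      Q.map (Int.castRingHom (ZMod n)) ∣ p.map (Int.castRingHom (ZMod n)) := by
  rw [map_dvd_map_intCastRingHom_iff]
  constructor
  · rintro ⟨c, hc⟩
    obtain ⟨u, rfl⟩ := AdjoinRoot.mk_surjective c
    obtain ⟨v, hv⟩ := AdjoinRoot.mk_eq_mk.1 (hc.trans (by rw [map_mul, map_natCast] :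
      _ = AdjoinRoot.mk Q (n * u)))
    exact ⟨u, v, by linear_combination hv⟩
  · rintro ⟨u, v, rfl⟩
    exact ⟨AdjoinRoot.mk Q u, by simp⟩

theorem orderOf_mk_X_dvd_iff_natCast_dvd (n : ℕ) (Q : ℤ[X]) (m : ℕ) :
    orderOf (Ideal.Quotient.mk (Ideal.span {Q.map (Int.castRingHom (ZMod n))}) X) ∣ m ↔
      (n : AdjoinRoot Q) ∣ AdjoinRoot.root Q ^ m - 1 := by
  rw [orderOf_mk_X_dvd_iff, ← AdjoinRoot.mk_X, ← map_pow, ← map_one (AdjoinRoot.mk Q),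
    ← map_sub, natCast_dvd_adjoinRoot_mk_iff]
  simp

theorem Polynomial.IsPrimitive.dvd_of_dvd_two_mul {Q p : ℤ[X]} (hQ : Q.IsPrimitive)
    (h : Q ∣ 2 * p) : Q ∣ p := by
  obtain ⟨v, hv⟩ := h
  have h2 : Prime (2 : ℤ[X]) := by simpa using Polynomial.prime_C_iff.2 Int.prime_two
  rcases h2.dvd_mul.1 ⟨p, hv.symm⟩ with ⟨c, rfl⟩ | ⟨w, rfl⟩
  · exact absurd (hQ 2 (by simp)) (by decide)
  · exact ⟨w, mul_left_cancel₀ two_ne_zero (by linear_combination hv)⟩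

theorem isLeftRegular_two_adjoinRoot {Q : ℤ[X]} (hQ : Q.IsPrimitive) :
    IsLeftRegular (2 : AdjoinRoot Q) := by
  intro a b hab
  induction a using AdjoinRoot.induction_on with | ih a =>
  induction b using AdjoinRoot.induction_on with | ih b =>
  refine AdjoinRoot.mk_eq_mk.2 (hQ.dvd_of_dvd_two_mul ?_)
  rw [mul_sub, ← AdjoinRoot.mk_eq_mk, map_mul, map_mul, map_ofNat]
  exact hab

theorem isPrime_span_two_adjoinRoot {Q : ℤ[X]} (hq : Prime (Q.map (Int.castRingHom (ZMod 2)))) :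
    (Ideal.span {(2 : AdjoinRoot Q)}).IsPrime := by
  have key (p : ℤ[X]) : AdjoinRoot.mk Q p ∈ Ideal.span {2} ↔
      Q.map (Int.castRingHom (ZMod 2)) ∣ p.map (Int.castRingHom (ZMod 2)) := by
    rw [Ideal.mem_span_singleton, ← natCast_dvd_adjoinRoot_mk_iff, Nat.cast_ofNat]
  refine Ideal.isPrime_iff.2 ⟨fun h => hq.not_isUnit ?_, fun {a b} hab => ?_⟩
  · have := (key 1).1 (by rw [map_one, h]; trivial)
    exact isUnit_of_dvd_one (by simpa using this)
  · induction a using AdjoinRoot.induction_on with | ih a =>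
    induction b using AdjoinRoot.induction_on with | ih b =>
    rw [← map_mul, key, Polynomial.map_mul] at hab
    simpa only [key] using hq.dvd_or_dvd hab

end AdjoinRootInt

section Divisibility

theorem odd_of_forall_dvd_iff {R : Type*} [CommRing R] [CharP R 2] {q x : R} (hq : Prime q)
    {lam : ℕ} (hpos : 0 < lam) (h : ∀ m, lam ∣ m ↔ q ∣ x ^ m - 1) : Odd lam := by
  by_contra hodd
  obtain ⟨k, rfl⟩ := Nat.not_odd_iff_even.1 hodd
  have hsq : x ^ (k + k) - 1 = (x ^ k - 1) ^ 2 := by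
    rw [sub_pow_char, one_pow, ← pow_mul, mul_two]
  have hk : k + k ∣ k := (h k).2 (hq.dvd_of_dvd_pow (hsq ▸ (h _).1 dvd_rfl))
  have := Nat.le_of_dvd (by omega) hk
  omega

theorem dvd_iff_sq_dvd_add_mul {R : Type*} [CommRing R] [IsDomain R] {q o v b D e : R}
    (hq : Prime q) (hov : q ∣ o * v - 1) (hb : b ^ 2 = D * v ^ 2 + q * v + q ^ 2 * e) :
    q ∣ b ↔ q ^ 2 ∣ D + o * q := by
  have hv : ¬ q ∣ v := fun h => hq.not_isUnit (isUnit_of_dvd_one (by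
    simpa using dvd_sub (h.mul_left o) hov))
  have hsq : q ∣ b ↔ q ^ 2 ∣ D * v ^ 2 + q * v := by
    rw [← dvd_add_left (dvd_mul_right (q ^ 2) e), ← hb]
    exact ⟨(pow_dvd_pow_of_dvd · 2),
      fun h => hq.dvd_of_dvd_pow ((dvd_pow_self q two_ne_zero).trans h)⟩
  rw [hsq]
  constructor
  · intro h
    obtain ⟨w, rfl⟩ : q ∣ D := by
      have : q ∣ D * v ^ 2 := by
        simpa using dvd_sub ((dvd_pow_self q two_ne_zero).trans h) (dvd_mul_right q v)
      exact (hq.dvd_or_dvd this).resolve_right (fun h' => hv (hq.dvd_of_dvd_pow h'))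
    have h1 : q ∣ v * (w * v + 1) := by
      rw [← mul_dvd_mul_iff_left hq.ne_zero]
      convert h using 1 <;> ring
    have h2 : q ∣ (w + o) * v := by
      convert dvd_add ((hq.dvd_or_dvd h1).resolve_left hv) hov using 1
      ring
    rw [sq, show q * w + o * q = q * (w + o) by ring]
    exact mul_dvd_mul_left q ((hq.dvd_or_dvd h2).resolve_right hv)
  · rintro ⟨t, ht⟩
    obtain ⟨s, hs⟩ := hov
    exact ⟨t * v ^ 2 - v * s, by linear_combination v ^ 2 * ht - q * v * hs⟩

theorem eq_C_coeff_mul_of_dvd_of_natDegree_le {R : Type*} [CommRing R] {m p : R[X]}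
    (hm : m.Monic) (h : m ∣ p) (hdeg : p.natDegree ≤ m.natDegree) :
    p = C (p.coeff m.natDegree) * m := by
  have hp := eq_leadingCoeff_mul_of_monic_of_dvd_of_natDegree_le hm h hdeg
  have hc : p.coeff m.natDegree = p.leadingCoeff := by
    conv_lhs => rw [hp]
    rw [coeff_C_mul, hm.coeff_natDegree, mul_one]
  rwa [hc]

end Divisibility

section ZModTwo

variable {q : (ZMod 2)[X]}

theorem sq_dvd_iff_eq_C_mul (hq : q.Monic) {D : (ZMod 2)[X]}
    (hD : D.natDegree ≤ 2 * q.natDegree) :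
    q ^ 2 ∣ D ↔ D = C (D.coeff (2 * q.natDegree)) * q ^ 2 := by
  refine ⟨fun h => ?_, fun h => ⟨_, h.trans (mul_comm _ _)⟩⟩
  have := eq_C_coeff_mul_of_dvd_of_natDegree_le (hq.pow 2) h (by rwa [hq.natDegree_pow])
  rwa [hq.natDegree_pow] at this

theorem dvd_iff_add_X_mul_derivative_mul_eq_zero (hq : q.Monic) (hqp : Prime q)
    {v a d e : (ZMod 2)[X]} (hov : q ∣ X * derivative q * v - 1)
    (hrel : a ^ 2 + d * v ^ 2 + q ^ 2 * e + q * v = 0) (hd : d.degree < ↑(2 * q.natDegree)) :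
    q ∣ a ↔ d + X * derivative q * q + C (q.natDegree : ZMod 2) * q ^ 2 = 0 := by
  set o := X * derivative q
  have ho : o.natDegree ≤ q.natDegree := natDegree_X_mul_derivative_le q
  have hsq : a ^ 2 = d * v ^ 2 + q * v + q ^ 2 * e := by
    linear_combination (norm := (ring_nf; reduce_mod_char)) hrel
  have hdeg : (d + o * q).natDegree ≤ 2 * q.natDegree :=
    natDegree_add_le_of_degree_le (natDegree_le_iff_degree_le.2 hd.le)
      ((natDegree_mul_le_of_le ho le_rfl).trans_eq (two_mul _).symm)
  have hcoeff : (d + o * q).coeff (2 * q.natDegree) = q.natDegree := by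
    rw [coeff_add, coeff_eq_zero_of_degree_lt hd, two_mul,
      coeff_mul_add_eq_of_natDegree_le ho le_rfl,
      coeff_X_mul_derivative, hq.coeff_natDegree]
    simp
  rw [dvd_iff_sq_dvd_add_mul hqp hov hsq, sq_dvd_iff_eq_C_mul hq hdeg, hcoeff, CharTwo.add_eq_zero]

theorem dvd_add_one_iff_add_X_mul_derivative_sq_eq_zero (hq : q.Monic) (hqp : Prime q)
    {v a d e : (ZMod 2)[X]} (hov : q ∣ X * derivative q * v - 1)
    (hrel : a ^ 2 + d * v ^ 2 + q ^ 2 * e + q * v = 0) (hd : d.degree < ↑(2 * q.natDegree)) :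
    q ∣ a + 1 ↔ d + (X * derivative q) ^ 2 + X * derivative q * q = 0 := by
  set o := X * derivative q
  have ho : o.natDegree ≤ q.natDegree := natDegree_X_mul_derivative_le q
  have hsq : (a + o * v) ^ 2 = (d + o ^ 2) * v ^ 2 + q * v + q ^ 2 * e := by
    linear_combination (norm := (ring_nf; reduce_mod_char)) hrel
  have hdeg : (d + o ^ 2 + o * q).natDegree ≤ 2 * q.natDegree := by
    refine natDegree_add_le_of_degree_le (natDegree_add_le_of_degree_le
      (natDegree_le_iff_degree_le.2 hd.le) (natDegree_pow_le_of_le 2 ho)) ?_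
    exact (natDegree_mul_le_of_le ho le_rfl).trans_eq (two_mul _).symm
  have hcoeff : (d + o ^ 2 + o * q).coeff (2 * q.natDegree) = 0 := by
    rw [coeff_add, coeff_add, coeff_eq_zero_of_degree_lt hd, two_mul, sq,
      coeff_mul_add_eq_of_natDegree_le ho ho, coeff_mul_add_eq_of_natDegree_le ho le_rfl,
      coeff_X_mul_derivative, hq.coeff_natDegree]
    generalize (q.natDegree : ZMod 2) = x
    revert x
    decide
  rw [← dvd_add_left hov, show a + 1 + (o * v - 1) = a + o * v by ring,
    dvd_iff_sq_dvd_add_mul hqp hov hsq, sq_dvd_iff_eq_C_mul hq hdeg, hcoeff, C_0, zero_mul]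

end ZModTwo

section ConditionS

theorem conditionS_iff {R o d : ℤ[X]} {ε : ℤ} (hlead : R.leadingCoeff = 1 - 2 * ε)
    (ho : R.comp (-X) = R - 2 * o) (hd : R.comp (X ^ 2) = R ^ 2 - 2 * d) :
    conditionS R ↔ (d + o ^ 2 + o * R + C ε * R ^ 2).map (Int.castRingHom (ZMod 2)) = 0 := by
  have h : R ^ 2 + R.comp (-X) ^ 2 - C (2 * R.leadingCoeff) * R.comp (X ^ 2) =
      4 * (d + o ^ 2 + o * R + C ε * R ^ 2 - 2 * (o * R + C ε * d)) := by
    rw [hlead, ho, hd, C_mul, C_sub, C_mul, C_1, C_ofNat]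
    ring
  rw [conditionS, ← sub_eq_zero, ← Polynomial.map_sub, h, map_four_mul_intCastRingHom_eq_zero_iff,
    Polynomial.map_sub, Polynomial.map_mul, Polynomial.map_ofNat,
    show (2 : (ZMod 2)[X]) = 0 from CharTwo.two_eq_zero, zero_mul, sub_zero]

theorem conditionS_iff_of_monic {Q o d : ℤ[X]} (hQ : Q.Monic) (ho : Q.comp (-X) = Q - 2 * o)
    (ho' : o.map (Int.castRingHom (ZMod 2)) = X * derivative (Q.map (Int.castRingHom (ZMod 2))))
    (hd : Q.comp (X ^ 2) = Q ^ 2 - 2 * d) :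
    conditionS Q ↔ d.map (Int.castRingHom (ZMod 2)) +
      (X * derivative (Q.map (Int.castRingHom (ZMod 2)))) ^ 2 +
      X * derivative (Q.map (Int.castRingHom (ZMod 2))) * Q.map (Int.castRingHom (ZMod 2)) = 0 := by
  rw [conditionS_iff (ε := 0) (by rw [hQ.leadingCoeff]; ring) ho hd]
  simp [ho']

theorem exists_neg_one_pow_eq_one_sub_two_mul (n : ℕ) :
    ∃ ε : ℤ, (-1) ^ n = 1 - 2 * ε ∧ (ε : ZMod 2) = n := by
  rcases Nat.even_or_odd n with hn | hn
  · exact ⟨0, by simp [hn.neg_one_pow], by simp [ZMod.natCast_eq_zero_iff_even.2 hn]⟩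
  · exact ⟨1, by rw [hn.neg_one_pow]; norm_num, by simp [ZMod.natCast_eq_one_iff_odd.2 hn]⟩

theorem conditionS_comp_neg_X_iff {Q o d : ℤ[X]} (hQ : Q.Monic) (ho : Q.comp (-X) = Q - 2 * o)
    (ho' : o.map (Int.castRingHom (ZMod 2)) = X * derivative (Q.map (Int.castRingHom (ZMod 2))))
    (hd : Q.comp (X ^ 2) = Q ^ 2 - 2 * d) :
    conditionS (Q.comp (-X)) ↔ d.map (Int.castRingHom (ZMod 2)) +
      X * derivative (Q.map (Int.castRingHom (ZMod 2))) * Q.map (Int.castRingHom (ZMod 2)) +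
      C (Q.natDegree : ZMod 2) * (Q.map (Int.castRingHom (ZMod 2))) ^ 2 = 0 := by
  obtain ⟨ε, hε, hε'⟩ := exists_neg_one_pow_eq_one_sub_two_mul Q.natDegree
  have hlead : (Q.comp (-X)).leadingCoeff = 1 - 2 * ε := by
    rw [leadingCoeff_comp (by simp), hQ.leadingCoeff, leadingCoeff_neg, leadingCoeff_X, one_mul, hε]
  have hneg : (Q.comp (-X)).comp (-X) = Q.comp (-X) - 2 * -o := by
    rw [comp_assoc, neg_comp, X_comp, neg_neg, comp_X, ho]
    ring
  have hsq : (Q.comp (-X)).comp (X ^ 2) =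
      (Q.comp (-X)) ^ 2 - 2 * (d + o.comp (X ^ 2) - 2 * (Q * o - o ^ 2)) := by
    rw [ho, sub_comp, mul_comp, ofNat_comp, hd]
    ring
  have hε2 : (C ε).map (Int.castRingHom (ZMod 2)) = C (Q.natDegree : ZMod 2) := by
    rw [map_C, eq_intCast, hε']
  rw [conditionS_iff hlead hneg hsq]
  refine Iff.of_eq (congrArg (· = 0) ?_)
  simp only [Polynomial.map_add, Polynomial.map_sub, Polynomial.map_mul, Polynomial.map_neg,
    Polynomial.map_pow, map_comp_X_sq_intCastRingHom_two, ho', ho, Polynomial.map_ofNat, hε2]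
  ring_nf
  reduce_mod_char

end ConditionS

theorem forall_orderOf_eq_two_pow_mul_iff {Q u v : ℤ[X]} {lam : ℕ} (hQ : Q.Monic)
    (hq : Prime (Q.map (Int.castRingHom (ZMod 2))))
    (hlam : lam = orderOf (Ideal.Quotient.mk (Ideal.span {Q.map (Int.castRingHom (ZMod 2))}) X))
    (hpos : 0 < lam) (h : X ^ lam - 1 = 2 * u + Q * v) :
    (∀ w, 1 ≤ w → orderOf (Ideal.Quotient.mk
        (Ideal.span {Q.map (Int.castRingHom (ZMod (2 ^ w)))}) X) = 2 ^ (w - 1) * lam) ↔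
      ¬ Q.map (Int.castRingHom (ZMod 2)) ∣ u.map (Int.castRingHom (ZMod 2)) ∧
        ¬ Q.map (Int.castRingHom (ZMod 2)) ∣ u.map (Int.castRingHom (ZMod 2)) + 1 := by
  have hx : AdjoinRoot.root Q ^ lam = 1 + 2 * AdjoinRoot.mk Q u := by
    have := congrArg (AdjoinRoot.mk Q) h
    simp only [map_sub, map_pow, map_one, map_add, map_mul, AdjoinRoot.mk_X, map_ofNat,
      AdjoinRoot.mk_self, zero_mul, add_zero] at this
    linear_combination this
  rw [orderOf_eq_two_pow_mul_iff (isPrime_span_two_adjoinRoot hq) (isLeftRegular_two_adjoinRoot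
      hQ.isPrimitive) _ (fun m => by rw [hlam, orderOf_mk_X_dvd_iff_natCast_dvd, Nat.cast_ofNat])
      (fun w m => by rw [orderOf_mk_X_dvd_iff_natCast_dvd, Nat.cast_pow, Nat.cast_ofNat]) hpos hx,
    ← map_one (AdjoinRoot.mk Q), ← map_add, ← Nat.cast_ofNat, natCast_dvd_adjoinRoot_mk_iff,
    natCast_dvd_adjoinRoot_mk_iff, Polynomial.map_add, Polynomial.map_one]

theorem conditionS_iff_map_dvd {Q u v : ℤ[X]} {n : ℕ} (hQ : Q.Monic)
    (hq : Prime (Q.map (Int.castRingHom (ZMod 2)))) (hn : Odd n) (h : X ^ n - 1 = 2 * u + Q * v) :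
    (conditionS Q ↔ Q.map (Int.castRingHom (ZMod 2)) ∣ u.map (Int.castRingHom (ZMod 2)) + 1) ∧
      (conditionS (Q.comp (-X)) ↔
        Q.map (Int.castRingHom (ZMod 2)) ∣ u.map (Int.castRingHom (ZMod 2))) := by
  obtain ⟨o, ho, ho'⟩ := exists_comp_neg_X_eq Q
  obtain ⟨d, hd⟩ := exists_comp_X_sq_eq Q
  obtain ⟨e, he⟩ := exists_map_sq_add_eq_zero h hd
  have hov := dvd_X_mul_derivative_mul_sub (n := n) (q := Q.map (Int.castRingHom (ZMod 2)))
    (v := v.map (Int.castRingHom (ZMod 2))) (by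
      simpa [show (2 : (ZMod 2)[X]) = 0 from CharTwo.two_eq_zero] using
        congrArg (map (Int.castRingHom (ZMod 2))) h)
  rw [← map_natCast C, (ZMod.natCast_eq_one_iff_odd).2 hn, C_1] at hov
  have hdeg : (d.map (Int.castRingHom (ZMod 2))).degree <
      ↑(2 * (Q.map (Int.castRingHom (ZMod 2))).natDegree) := by
    rw [hQ.natDegree_map]
    exact degree_map_le.trans_lt (degree_lt_of_comp_X_sq_eq hQ hd)
  rw [conditionS_iff_of_monic hQ ho ho' hd, conditionS_comp_neg_X_iff hQ ho ho' hd,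
    ← hQ.natDegree_map (Int.castRingHom (ZMod 2)),
    dvd_add_one_iff_add_X_mul_derivative_sq_eq_zero (hQ.map _) hq hov he hdeg,
    dvd_iff_add_X_mul_derivative_mul_eq_zero (hQ.map _) hq hov he hdeg]
  exact ⟨Iff.rfl, Iff.rfl⟩

theorem stmt14_general (Q : Polynomial ℤ)
    (hmonic : Q.Monic) (hconst : Odd (Q.coeff 0))
    (hirr : Irreducible (Q.map (Int.castRingHom (ZMod 2))))
    (lam : ℕ)
    (hlam : lam = orderOf (Ideal.Quotient.mk
      (Ideal.span {Q.map (Int.castRingHom (ZMod 2))}) (X : Polynomial (ZMod 2)))) :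
    (∀ w : ℕ, 1 ≤ w →
      orderOf (Ideal.Quotient.mk
          (Ideal.span {Q.map (Int.castRingHom (ZMod (2 ^ w)))})
          (X : Polynomial (ZMod (2 ^ w)))) = 2 ^ (w - 1) * lam) ↔
      (¬ conditionS Q ∧ ¬ conditionS (Q.comp (-X))) := by
  have hq : Prime (Q.map (Int.castRingHom (ZMod 2))) := hirr.prime
  have hpos : 0 < lam := hlam ▸ orderOf_mk_X_pos (hmonic.map _) (by
    rwa [coeff_map, eq_intCast, Ne, ZMod.intCast_eq_zero_iff_even, Int.not_even_iff_odd])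
  have hlam_dvd (m : ℕ) : lam ∣ m ↔ Q.map (Int.castRingHom (ZMod 2)) ∣ X ^ m - 1 :=
    hlam ▸ orderOf_mk_X_dvd_iff _ m
  obtain ⟨u, v, huv⟩ := (map_dvd_map_intCastRingHom_iff 2 Q (X ^ lam - 1)).1 (by
    simpa using (hlam_dvd lam).1 dvd_rfl)
  rw [Nat.cast_ofNat] at huv
  obtain ⟨hS, hS'⟩ := conditionS_iff_map_dvd hmonic hq (odd_of_forall_dvd_iff hq hpos hlam_dvd) huv
  rw [forall_orderOf_eq_two_pow_mul_iff hmonic hq hlam hpos huv, hS, hS', and_comm]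

theorem stmt14 (Q : Polynomial ℤ) (r : ℕ) (hr : Q.natDegree = r)
    (hmonic : Q.Monic) (hconst : Odd (Q.coeff 0))
    (hirr : Irreducible (Q.map (Int.castRingHom (ZMod 2))))
    (lam : ℕ)
    (hlam : lam = orderOf (Ideal.Quotient.mk
      (Ideal.span {Q.map (Int.castRingHom (ZMod 2))}) (X : Polynomial (ZMod 2)))) :
    (∀ w : ℕ, 1 ≤ w →
      orderOf (Ideal.Quotient.mk
          (Ideal.span {Q.map (Int.castRingHom (ZMod (2 ^ w)))})
          (X : Polynomial (ZMod (2 ^ w)))) = 2 ^ (w - 1) * lam) ↔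
      (¬ conditionS Q ∧ ¬ conditionS (Q.comp (-X))) :=
  stmt14_general Q hmonic hconst hirr lam hlam
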